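/- If M is a projectively finitely related R-module (there exists a short exact sequence 0 → K → P → M → 0 with K finitely generated and P projective), then there exist a finitely presented module M₀ and free modules F′, F″ with M ⊕ F′ ≅ M₀ ⊕ F″. -/

import Mathlib

universe u

open LinearMap

section aux

variable {R : Type u} [Ring R]

/-- Finsupp into a product splits as a product of finsupps. -/
noncomputable def finsuppProdSplit (ι : Type*) (A B : Type*) [AddCommGroup A] [Module R A]
    [AddCommGroup B] [Module R B] : (ι →₀ (A × B)) ≃ₗ[R] (ι →₀ A) × (ι →₀ B) :=
  LinearEquiv.ofLinear
    (LinearMap.prod (Finsupp.mapRange.linearMap (LinearMap.fst R A B))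
      (Finsupp.mapRange.linearMap (LinearMap.snd R A B)))
    (LinearMap.coprod (Finsupp.mapRange.linearMap (LinearMap.inl R A B))
      (Finsupp.mapRange.linearMap (LinearMap.inr R A B)))
    (by ext <;> simp) (by ext <;> simp)

/-- Shift equivalence: `ℕ →₀ A` absorbs one copy of `A`. -/
noncomputable def finsuppNatShift (A : Type*) [AddCommGroup A] [Module R A] :
    (ℕ →₀ A) ≃ₗ[R] A × (ℕ →₀ A) :=
  (Finsupp.domLCongr Equiv.natEquivNatSumPUnit.{0}).trans <|
    (Finsupp.sumFinsuppLEquivProdFinsupp R).trans <|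
      ((LinearEquiv.refl R (ℕ →₀ A)).prodCongr
        (Finsupp.LinearEquiv.finsuppUnique R A PUnit)).trans <|
        LinearEquiv.prodComm R (ℕ →₀ A) A

/-- A split surjection gives a product decomposition. -/
noncomputable def splitEquiv {F P : Type*} [AddCommGroup F] [Module R F]
    [AddCommGroup P] [Module R P] (π : F →ₗ[R] P) (s : P →ₗ[R] F)
    (h : ∀ p, π (s p) = p) : F ≃ₗ[R] P × LinearMap.ker π where
  toFun x := (π x, ⟨x - s (π x), by simp [h]⟩)
  invFun pq := s pq.1 + pq.2
  left_inv x := by simp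
  right_inv pq := by
    have h2 : π pq.2.1 = 0 := pq.2.2
    ext <;> simp [h, h2]
  map_add' x y := by ext <;> simp [add_sub_add_comm]
  map_smul' r x := by ext <;> simp [smul_sub]

/-- A rearrangement of products. -/
def prodShuffle (A B C D : Type*) [AddCommGroup A] [Module R A] [AddCommGroup B] [Module R B]
    [AddCommGroup C] [Module R C] [AddCommGroup D] [Module R D] :
    (A × ((B × C) × D)) ≃ₗ[R] (A × C) × (B × D) where
  toFun x := ((x.1, x.2.1.2), (x.2.1.1, x.2.2))
  invFun y := (y.1.1, ((y.2.1, y.1.2), y.2.2))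
  left_inv _ := rfl
  right_inv _ := rfl
  map_add' _ _ := rfl
  map_smul' _ _ := rfl

/-- Quotient by a named kernel. -/
noncomputable def quotPiece {F A : Type u} [AddCommGroup F] [Module R F]
    [AddCommGroup A] [Module R A] (K' : Submodule R F) (φ : F →ₗ[R] A)
    (hs : Function.Surjective φ) (hk : LinearMap.ker φ = K') : (F ⧸ K') ≃ₗ[R] A :=
  (Submodule.quotEquivOfEq K' (LinearMap.ker φ) hk.symm).trans (φ.quotKerEquivOfSurjective hs)

end aux

set_option maxHeartbeats 1000000 in
theorem pfr_stably_finitePresentation {R : Type u} [Ring R]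
    {M K P : Type u}
    [AddCommGroup M] [Module R M] [AddCommGroup K] [Module R K]
    [AddCommGroup P] [Module R P]
    (hK : Module.Finite R K) (hP : Module.Projective R P)
    (f : K →ₗ[R] P) (g : P →ₗ[R] M)
    (hf : Function.Injective f) (hg : Function.Surjective g)
    (hfg : LinearMap.range f = LinearMap.ker g) :
    ∃ (M₀ : Type u) (_ : AddCommGroup M₀) (_ : Module R M₀) (s t : Type u),
      Module.FinitePresentation R M₀ ∧
      Nonempty ((M × (s →₀ R)) ≃ₗ[R] (M₀ × (t →₀ R))) := by
  classical
  obtain ⟨sP, hsP⟩ := Module.projective_def.mp hP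
  let F : Type u := P →₀ R
  let π : F →ₗ[R] P := Finsupp.linearCombination R id
  let Q : Submodule R F := LinearMap.ker π
  have hπs : ∀ p, π (sP p) = p := hsP
  -- the image of K in F
  let K' : Submodule R F := LinearMap.range (sP ∘ₗ f)
  have hK'fg : K'.FG := by
    rw [show K' = Submodule.map (sP ∘ₗ f) ⊤ from (Submodule.map_top _).symm]
    exact (Module.finite_def.mp hK).map _
  obtain ⟨S, hS⟩ := hK'fg
  let σ : Finset P := S.sup fun v => v.support
  have hK'supp : K' ≤ Finsupp.supported R R (σ : Set P) := by
    rw [← hS, Submodule.span_le]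
    intro v hv
    rw [SetLike.mem_coe, Finsupp.mem_supported]
    exact Finset.coe_subset.mpr (Finset.le_sup hv)
  let F₁ : Type u := {x : P // x ∈ σ} →₀ R
  let F₂ : Type u := {x : P // x ∉ σ} →₀ R
  let e : F ≃ₗ[R] F₁ × F₂ :=
    (Finsupp.domLCongr (Equiv.sumCompl (· ∈ σ)).symm).trans
      (Finsupp.sumFinsuppLEquivProdFinsupp R)
  have he2 : ∀ x ∈ K', (e x).2 = 0 := by
    intro x hx
    ext b
    have hsupp := (Finsupp.mem_supported R x).mp (hK'supp hx)
    have hxb : x (b : P) = 0 := by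
      by_contra h
      exact b.2 (hsupp (Finsupp.mem_support_iff.mpr h))
    exact hxb
  let c : K →ₗ[R] F₁ := LinearMap.fst R F₁ F₂ ∘ₗ (e.toLinearMap ∘ₗ (sP ∘ₗ f))
  let K₀ : Submodule R F₁ := LinearMap.range c
  have hK₀fg : K₀.FG := by
    rw [show K₀ = Submodule.map c ⊤ from (Submodule.map_top _).symm]
    exact (Module.finite_def.mp hK).map _
  let M₀ : Type u := F₁ ⧸ K₀
  have hfp : Module.FinitePresentation R M₀ :=
    Module.finitePresentation_of_surjective K₀.mkQ (Submodule.mkQ_surjective _)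
      (by rw [Submodule.ker_mkQ]; exact hK₀fg)
  -- image of K' under e
  have hmap : Submodule.map (e : F →ₗ[R] F₁ × F₂) K' = K₀.prod ⊥ := by
    apply le_antisymm
    · rintro _ ⟨x, hx, rfl⟩
      obtain ⟨k, rfl⟩ := hx
      exact Submodule.mem_prod.mpr ⟨⟨k, rfl⟩, he2 _ ⟨k, rfl⟩⟩
    · rintro ⟨a, b⟩ hab
      rw [Submodule.mem_prod] at hab
      obtain ⟨⟨k, hk⟩, hb⟩ := hab
      refine ⟨sP (f k), ⟨k, rfl⟩, ?_⟩
      have h2 := he2 (sP (f k)) ⟨k, rfl⟩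
      have hb0 : b = 0 := hb
      exact Prod.ext hk (h2.trans hb0.symm)
  -- F ⧸ K' ≃ M × Q
  let ρ : F →ₗ[R] Q := LinearMap.codRestrict Q (LinearMap.id - sP ∘ₗ π)
    (fun x => by simp [Q, LinearMap.mem_ker, hπs])
  let φ : F →ₗ[R] (M × Q) := (g ∘ₗ π).prod ρ
  have hφsurj : Function.Surjective φ := by
    rintro ⟨m, q⟩
    obtain ⟨p, rfl⟩ := hg m
    have hq : π q.1 = 0 := q.2
    refine ⟨sP p + q.1, ?_⟩
    have hπx : π (sP p + q.1) = p := by rw [map_add, hπs, hq, add_zero]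
    refine Prod.ext ?_ ?_
    · show g (π (sP p + q.1)) = g p
      rw [hπx]
    · show ρ (sP p + q.1) = q
      apply Subtype.ext
      show (sP p + q.1) - sP (π (sP p + q.1)) = q.1
      rw [hπx]
      abel
  have hφker : LinearMap.ker φ = K' := by
    ext x
    constructor
    · intro hx
      have h1 : g (π x) = 0 := congrArg Prod.fst hx
      have h2 : x - sP (π x) = 0 := congrArg (Subtype.val ∘ Prod.snd) hx
      have : π x ∈ LinearMap.ker g := h1
      rw [← hfg] at this
      obtain ⟨k, hk⟩ := this
      refine ⟨k, ?_⟩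
      show sP (f k) = x
      rw [hk]
      rw [sub_eq_zero] at h2
      exact h2.symm
    · rintro ⟨k, rfl⟩
      have hπk : π (sP (f k)) = f k := hπs _
      have hgf : g (f k) = 0 := by
        have : f k ∈ LinearMap.ker g := hfg ▸ LinearMap.mem_range_self f k
        exact this
      refine Prod.ext ?_ (Subtype.ext ?_)
      · show g (π (sP (f k))) = 0
        rw [hπk, hgf]
      · show sP (f k) - sP (π (sP (f k))) = 0
        rw [hπk, sub_self]
  let eqMQ : (F ⧸ K') ≃ₗ[R] M × Q := quotPiece (A := M × Q) K' φ hφsurj hφker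
  -- (F₁ × F₂) ⧸ (K₀ × ⊥) ≃ M₀ × F₂
  let ψ : (F₁ × F₂) →ₗ[R] (M₀ × F₂) := (K₀.mkQ).prodMap LinearMap.id
  have hψsurj : Function.Surjective ψ :=
    (Submodule.mkQ_surjective _).prodMap Function.surjective_id
  have hψker : LinearMap.ker ψ = K₀.prod ⊥ := by
    rw [LinearMap.ker_prodMap, Submodule.ker_mkQ, LinearMap.ker_id]
  let eq2 : ((F₁ × F₂) ⧸ (K₀.prod (⊥ : Submodule R F₂))) ≃ₗ[R] M₀ × F₂ :=
    quotPiece _ ψ hψsurj hψker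
  let eq3 : (F ⧸ K') ≃ₗ[R] ((F₁ × F₂) ⧸ (K₀.prod (⊥ : Submodule R F₂))) :=
    Submodule.Quotient.equiv K' _ e hmap
  let eqMain : (M × Q) ≃ₗ[R] (M₀ × F₂) := eqMQ.symm.trans (eq3.trans eq2)
  -- the Eilenberg swindle
  let eSplit : F ≃ₗ[R] P × Q := splitEquiv π sP hπs
  let absorb : (P × (ℕ →₀ F)) ≃ₗ[R] (ℕ →₀ F) :=
    ((LinearEquiv.refl R P).prodCongr
      ((Finsupp.mapRange.linearEquiv eSplit).trans (finsuppProdSplit ℕ P Q))).trans <|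
    ((LinearEquiv.prodAssoc R P (ℕ →₀ P) (ℕ →₀ Q)).symm.trans
      (((finsuppNatShift P).symm.prodCongr (LinearEquiv.refl R (ℕ →₀ Q))).trans
        ((finsuppProdSplit ℕ P Q).symm.trans (Finsupp.mapRange.linearEquiv eSplit).symm)))
  let big : (M × ((ℕ × P) →₀ R)) ≃ₗ[R] (M₀ × (({x : P // x ∉ σ} ⊕ (ℕ × P)) →₀ R)) :=
    ((LinearEquiv.refl R M).prodCongr (Finsupp.finsuppProdLEquiv R)).trans <|
    ((LinearEquiv.refl R M).prodCongr ((finsuppNatShift F).trans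
      (eSplit.prodCongr (LinearEquiv.refl R (ℕ →₀ F))))).trans <|
    (prodShuffle M P Q (ℕ →₀ F)).trans <|
    (eqMain.prodCongr absorb).trans <|
    (LinearEquiv.prodAssoc R M₀ F₂ (ℕ →₀ F)).trans <|
    ((LinearEquiv.refl R M₀).prodCongr
      (((LinearEquiv.refl R F₂).prodCongr (Finsupp.finsuppProdLEquiv R).symm).trans
        (Finsupp.sumFinsuppLEquivProdFinsupp R).symm))
  exact ⟨M₀, inferInstance, inferInstance, ℕ × P, {x : P // x ∉ σ} ⊕ (ℕ × P), hfp, ⟨big⟩⟩
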